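/- arXiv:2008.08291 — 2 statements merged into one kernel-verified Lean document; each statement's English description precedes it below -/
import Mathlib

section
/- Let A and B be real d×d matrices. Suppose A is symmetric, invertible, with exactly one negative eigenvalue, and AB is skew-symmetric. Then A + B is invertible and has exactly one negative real eigenvalue, whose geometric multiplicity is 1. -/
/-!
Multiplying the eigen-equation `(A + B) x = μ x` by `A` and pairing with `x` kills the skew
term `x ⬝ᵥ (A * B) *ᵥ x`, leaving `‖A x‖² = μ (x ⬝ᵥ A *ᵥ x)`. With `μ = 0` this shows that
`A + t • B` is invertible for every `t`, so `det (A + B)` has the sign of `det A`, which is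
negative; hence the characteristic polynomial of `A + B` has a negative root. For `μ < 0` the
form of `A` is negative on the eigenvector, and Cauchy–Schwarz extends this to the sum of two
such eigenspaces. But `A` has a single negative eigenvalue, so its form is positive definite on a
hyperplane and nonpositive only on subspaces of dimension at most one; this gives both the
uniqueness of the negative eigenvalue and its geometric multiplicity one.
-/

open Matrix

namespace Matrix

variable {n : Type*} [Fintype n] {A B : Matrix n n ℝ}

lemma IsSymm.dotProduct_mulVec_comm (hA : A.IsSymm) (x y : n → ℝ) :
    y ⬝ᵥ A *ᵥ x = x ⬝ᵥ A *ᵥ y := by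
  rw [dotProduct_mulVec, ← mulVec_transpose, hA.eq, dotProduct_comm]

lemma dotProduct_mulVec_of_transpose_eq_neg {S : Matrix n n ℝ} (hS : Sᵀ = -S) (x y : n → ℝ) :
    y ⬝ᵥ S *ᵥ x = -(x ⬝ᵥ S *ᵥ y) := by
  rw [dotProduct_mulVec, ← mulVec_transpose, hS, neg_mulVec, neg_dotProduct, dotProduct_comm]

/-- Multiply the eigen-equations by `A` and pair them with `y` and `x`: in the sum the skew
part `A * B` cancels. -/
lemma two_mul_mulVec_dotProduct_mulVec (hA : A.IsSymm) (hAB : (A * B)ᵀ = -(A * B))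
    {μ ν : ℝ} {x y : n → ℝ} (hx : (A + B) *ᵥ x = μ • x) (hy : (A + B) *ᵥ y = ν • y) :
    2 * (A *ᵥ x ⬝ᵥ A *ᵥ y) = (μ + ν) * (x ⬝ᵥ A *ᵥ y) := by
  have hAA (u v : n → ℝ) : u ⬝ᵥ (A * A) *ᵥ v = A *ᵥ u ⬝ᵥ A *ᵥ v := by
    rw [← mulVec_mulVec, dotProduct_mulVec, ← mulVec_transpose, hA.eq]
  have hA_eigen {z : n → ℝ} {ρ : ℝ} (hz : (A + B) *ᵥ z = ρ • z) :
      (A * A) *ᵥ z + (A * B) *ᵥ z = ρ • A *ᵥ z := by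
    rw [← add_mulVec, ← mul_add, ← mulVec_mulVec, hz, mulVec_smul]
  have ex := congrArg (y ⬝ᵥ ·) (hA_eigen hx)
  have ey := congrArg (x ⬝ᵥ ·) (hA_eigen hy)
  simp only [dotProduct_add, dotProduct_smul, smul_eq_mul, hAA] at ex ey
  rw [dotProduct_mulVec_of_transpose_eq_neg hAB x y, hA.dotProduct_mulVec_comm x y,
    dotProduct_comm (A *ᵥ y)] at ex
  linarith

lemma mulVec_dotProduct_mulVec_eq_mul (hA : A.IsSymm) (hAB : (A * B)ᵀ = -(A * B))
    {μ : ℝ} {x : n → ℝ} (hx : (A + B) *ᵥ x = μ • x) :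
    A *ᵥ x ⬝ᵥ A *ᵥ x = μ * (x ⬝ᵥ A *ᵥ x) := by
  linarith [two_mul_mulVec_dotProduct_mulVec hA hAB hx hx]

variable [DecidableEq n]

lemma det_add_ne_zero (hA : A.IsSymm) (hAinv : IsUnit A.det) (hAB : (A * B)ᵀ = -(A * B)) :
    (A + B).det ≠ 0 := by
  intro h
  obtain ⟨x, hx0, hx⟩ := exists_mulVec_eq_zero_iff.mpr h
  have hAx : A *ᵥ x ⬝ᵥ A *ᵥ x = 0 := by
    simpa using mulVec_dotProduct_mulVec_eq_mul hA hAB (μ := 0) (by simpa using hx)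
  have hA_inj := mulVec_injective_iff_isUnit.mpr ((isUnit_iff_isUnit_det A).mpr hAinv)
  exact hx0 (hA_inj (by simpa using dotProduct_self_eq_zero.mp hAx))

lemma det_add_neg (hA : A.IsSymm) (hAinv : IsUnit A.det) (hAB : (A * B)ᵀ = -(A * B))
    (hdet : A.det < 0) : (A + B).det < 0 := by
  have hne (t : ℝ) : (A + t • B).det ≠ 0 :=
    det_add_ne_zero hA hAinv (by rw [mul_smul_comm, transpose_smul, hAB, smul_neg])
  by_contra! h
  have hcont : Continuous fun t : ℝ => (A + t • B).det := by fun_prop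
  obtain ⟨t, -, ht⟩ := intermediate_value_Icc zero_le_one hcont.continuousOn
    (show (0 : ℝ) ∈ Set.Icc _ _ by simpa using ⟨hdet.le, h⟩)
  exact hne t ht

/-- `s ↦ det (s • 1 + M)` is the monic polynomial `charpoly (-M)`, hence positive for large `s`;
its value `det M < 0` at `s = 0` then forces a root `s > 0`. -/
lemma exists_neg_hasEigenvalue_of_det_neg {M : Matrix n n ℝ} (hM : M.det < 0) :
    ∃ μ < 0, Module.End.HasEigenvalue (toLin' M) μ := by
  have heval (s : ℝ) : (-M).charpoly.eval s = (scalar n s + M).det := by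
    rw [eval_charpoly, sub_neg_eq_add]
  have hn : 0 < Fintype.card n := Fintype.card_pos_iff.mpr <| by
    by_contra h
    rw [not_nonempty_iff] at h
    norm_num [det_isEmpty] at hM
  have htend : Filter.Tendsto (fun s => (-M).charpoly.eval s) Filter.atTop Filter.atTop :=
    (-M).charpoly.tendsto_atTop_of_leadingCoeff_nonneg
      (by rw [charpoly_degree_eq_dim]; exact_mod_cast hn)
      (by rw [(charpoly_monic _).leadingCoeff]; exact zero_le_one)
  obtain ⟨s, hs, hs0⟩ :=
    ((htend.eventually_gt_atTop 0).and (Filter.eventually_ge_atTop 0)).exists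
  obtain ⟨t, ⟨ht0, -⟩, ht⟩ := intermediate_value_Icc hs0 (-M).charpoly.continuous.continuousOn
    ⟨by simpa [heval] using hM.le, hs.le⟩
  have htM : (scalar n t + M).det = 0 := by rw [← heval]; exact ht
  obtain ⟨v, hv0, hv⟩ := exists_mulVec_eq_zero_iff.mpr htM
  refine ⟨-t, neg_neg_of_pos (ht0.lt_of_ne ?_), Module.End.hasEigenvalue_of_hasEigenvector
    ⟨Module.End.mem_eigenspace_iff.mpr ?_, hv0⟩⟩
  · rintro rfl
    simp [hM.ne] at htM
  · rw [toLin'_apply, neg_smul, eq_neg_iff_add_eq_zero, add_comm, ← hv]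
    simp [add_mulVec]

/-- For `x`, `y` in the two eigenspaces, `two_mul_mulVec_dotProduct_mulVec` and `4μν ≤ (μ + ν)²`
turn Cauchy–Schwarz for `A *ᵥ x`, `A *ᵥ y` into
`(x ⬝ᵥ A *ᵥ y)² ≤ (x ⬝ᵥ A *ᵥ x) * (y ⬝ᵥ A *ᵥ y)`. -/
lemma dotProduct_mulVec_nonpos_of_mem_eigenspace_sup (hA : A.IsSymm)
    (hAB : (A * B)ᵀ = -(A * B)) {μ ν : ℝ} (hμ : μ < 0) (hν : ν < 0) {z : n → ℝ}
    (hz : z ∈ Module.End.eigenspace (toLin' (A + B)) μ ⊔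
      Module.End.eigenspace (toLin' (A + B)) ν) :
    z ⬝ᵥ A *ᵥ z ≤ 0 := by
  obtain ⟨x, hx, y, hy, rfl⟩ := Submodule.mem_sup.mp hz
  rw [Module.End.mem_eigenspace_iff, toLin'_apply] at hx hy
  have hGxy := two_mul_mulVec_dotProduct_mulVec hA hAB hx hy
  have hNx := mulVec_dotProduct_mulVec_eq_mul hA hAB hx
  have hNy := mulVec_dotProduct_mulVec_eq_mul hA hAB hy
  have hCS : (A *ᵥ x ⬝ᵥ A *ᵥ y) ^ 2 ≤ (A *ᵥ x ⬝ᵥ A *ᵥ x) * (A *ᵥ y ⬝ᵥ A *ᵥ y) := by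
    simpa [dotProduct, sq] using Finset.sum_mul_sq_le_sq_mul_sq Finset.univ (A *ᵥ x) (A *ᵥ y)
  have hx0 : 0 ≤ A *ᵥ x ⬝ᵥ A *ᵥ x := Fintype.sum_nonneg fun _ => mul_self_nonneg _
  have hy0 : 0 ≤ A *ᵥ y ⬝ᵥ A *ᵥ y := Fintype.sum_nonneg fun _ => mul_self_nonneg _
  rw [mulVec_add, dotProduct_add, add_dotProduct, add_dotProduct, hA.dotProduct_mulVec_comm x y]
  set qx := x ⬝ᵥ A *ᵥ x
  set qy := y ⬝ᵥ A *ᵥ y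
  set P := x ⬝ᵥ A *ᵥ y
  have hqx : qx ≤ 0 := by nlinarith
  have hqy : qy ≤ 0 := by nlinarith
  have hP : P ^ 2 ≤ qx * qy := by
    have h4 : (μ + ν) ^ 2 * P ^ 2 ≤ (μ + ν) ^ 2 * (qx * qy) :=
      calc (μ + ν) ^ 2 * P ^ 2 = ((μ + ν) * P) ^ 2 := by ring
        _ = 4 * (A *ᵥ x ⬝ᵥ A *ᵥ y) ^ 2 := by rw [← hGxy]; ring
        _ ≤ 4 * (μ * ν) * (qx * qy) := by rw [hNx, hNy] at hCS; linarith
        _ ≤ (μ + ν) ^ 2 * (qx * qy) := by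
          nlinarith [sq_nonneg (μ - ν), mul_nonneg_of_nonpos_of_nonpos hqx hqy]
    exact le_of_mul_le_mul_left h4 (by nlinarith)
  nlinarith [sq_nonneg (qx - qy)]

namespace IsHermitian

lemma dotProduct_mulVec_eq_sum_eigenvalues (hA : A.IsHermitian) (v : n → ℝ) :
    v ⬝ᵥ A *ᵥ v =
      ∑ i, hA.eigenvalues i * (star (hA.eigenvectorUnitary : Matrix n n ℝ) *ᵥ v) i ^ 2 := by
  conv_lhs => rw [hA.spectral_theorem, Unitary.conjStarAlgAut_apply]
  rw [← mulVec_mulVec, ← mulVec_mulVec, dotProduct_mulVec, ← mulVec_transpose,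
    ← conjTranspose_eq_transpose_of_trivial, ← star_eq_conjTranspose]
  simp [dotProduct, mulVec_diagonal, sq, mul_left_comm]

lemma dotProduct_mulVec_pos_of_eigenvectorUnitary_mulVec_eq_zero (hA : A.IsHermitian) {i₀ : n}
    (hpos : ∀ i ≠ i₀, 0 < hA.eigenvalues i) {v : n → ℝ} (hv : v ≠ 0)
    (hv₀ : (star (hA.eigenvectorUnitary : Matrix n n ℝ) *ᵥ v) i₀ = 0) :
    0 < v ⬝ᵥ A *ᵥ v := by
  set c := star (hA.eigenvectorUnitary : Matrix n n ℝ) *ᵥ v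
  have hc : c ≠ 0 := fun h => hv <| by
    simpa [c, mulVec_mulVec] using congrArg ((hA.eigenvectorUnitary : Matrix n n ℝ) *ᵥ ·) h
  obtain ⟨j, hj⟩ : ∃ j, c j ≠ 0 := Function.ne_iff.mp hc
  have hji : j ≠ i₀ := by rintro rfl; exact hj hv₀
  rw [hA.dotProduct_mulVec_eq_sum_eigenvalues]
  refine Finset.sum_pos' (fun i _ => ?_)
    ⟨j, Finset.mem_univ j, mul_pos (hpos j hji) (pow_two_pos_of_ne_zero hj)⟩
  obtain rfl | hi := eq_or_ne i i₀
  · simp [c, hv₀]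
  · exact mul_nonneg (hpos i hi).le (sq_nonneg _)

lemma finrank_le_one_of_dotProduct_mulVec_nonpos (hA : A.IsHermitian) {i₀ : n}
    (hpos : ∀ i ≠ i₀, 0 < hA.eigenvalues i) (W : Submodule ℝ (n → ℝ))
    (hW : ∀ z ∈ W, z ⬝ᵥ A *ᵥ z ≤ 0) : Module.finrank ℝ W ≤ 1 := by
  let ℓ : (n → ℝ) →ₗ[ℝ] ℝ :=
    LinearMap.proj i₀ ∘ₗ toLin' (star (hA.eigenvectorUnitary : Matrix n n ℝ))
  have hℓ : Function.Injective (ℓ.domRestrict W) := by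
    refine (injective_iff_map_eq_zero _).mpr fun w hw => ?_
    by_contra hw0
    have hw_pos := hA.dotProduct_mulVec_pos_of_eigenvectorUnitary_mulVec_eq_zero hpos
      (v := w) (by simpa using hw0) (by simpa [ℓ] using hw)
    exact (hW w w.2).not_gt hw_pos
  simpa using LinearMap.finrank_le_finrank_of_injective hℓ

lemma exists_eigenvalues_neg_and_pos (hA : A.IsHermitian) (hAinv : IsUnit A.det)
    (hAneg : (Finset.univ.filter (fun i => hA.eigenvalues i < 0)).card = 1) :
    ∃ i₀, hA.eigenvalues i₀ < 0 ∧ ∀ i ≠ i₀, 0 < hA.eigenvalues i := by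
  obtain ⟨i₀, hi₀⟩ := Finset.card_eq_one.mp hAneg
  have hneg (i : n) : hA.eigenvalues i < 0 ↔ i = i₀ := by
    simpa using Finset.ext_iff.mp hi₀ i
  have hne (i : n) : hA.eigenvalues i ≠ 0 := fun h => hAinv.ne_zero <| by
    rw [hA.det_eq_prod_eigenvalues]
    exact Finset.prod_eq_zero (Finset.mem_univ i) (by simp [h])
  exact ⟨i₀, (hneg i₀).mpr rfl, fun i hi => (hne i).lt_or_gt.resolve_left (mt (hneg i).mp hi)⟩

lemma det_neg (hA : A.IsHermitian) {i₀ : n} (hneg : hA.eigenvalues i₀ < 0)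
    (hpos : ∀ i ≠ i₀, 0 < hA.eigenvalues i) : A.det < 0 := by
  rw [hA.det_eq_prod_eigenvalues, ← Finset.mul_prod_erase _ _ (Finset.mem_univ i₀)]
  exact mul_neg_of_neg_of_pos (by simpa using hneg)
    (Finset.prod_pos fun i hi => by simpa using hpos i (Finset.ne_of_mem_erase hi))

end IsHermitian

end Matrix

theorem stmt_2 (d : ℕ) (A B : Matrix (Fin d) (Fin d) ℝ)
    (hA : A.IsHermitian) (hAinv : IsUnit A.det)
    (hAneg : (Finset.univ.filter (fun i => hA.eigenvalues i < 0)).card = 1)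
    (hAB : (A * B)ᵀ = -(A * B)) :
    IsUnit (A + B).det ∧
    (∃! μ : ℝ, μ < 0 ∧ Module.End.HasEigenvalue (Matrix.toLin' (A + B)) μ) ∧
    (∀ μ : ℝ, μ < 0 → Module.End.HasEigenvalue (Matrix.toLin' (A + B)) μ →
      Module.finrank ℝ (Module.End.eigenspace (Matrix.toLin' (A + B)) μ) = 1) := by
  have hAs : A.IsSymm := isHermitian_iff_isSymm.mp hA
  obtain ⟨i₀, hneg, hpos⟩ := hA.exists_eigenvalues_neg_and_pos hAinv hAneg
  have hdet : (A + B).det < 0 := det_add_neg hAs hAinv hAB (hA.det_neg hneg hpos)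
  set E := Module.End.eigenspace (toLin' (A + B))
  have hrank {μ ν : ℝ} (hμ : μ < 0) (hν : ν < 0) : Module.finrank ℝ ↥(E μ ⊔ E ν) ≤ 1 :=
    hA.finrank_le_one_of_dotProduct_mulVec_nonpos hpos _ fun _ hz =>
      dotProduct_mulVec_nonpos_of_mem_eigenspace_sup hAs hAB hμ hν hz
  have hrank_pos {μ : ℝ} (hμE : Module.End.HasEigenvalue (toLin' (A + B)) μ) :
      0 < Module.finrank ℝ (E μ) :=
    Nat.pos_of_ne_zero (Submodule.finrank_eq_zero.not.mpr (Module.End.hasEigenvalue_iff.mp hμE))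
  refine ⟨isUnit_iff_ne_zero.mpr hdet.ne, ?_, fun μ hμ hμE => ?_⟩
  · obtain ⟨μ, hμ, hμE⟩ := exists_neg_hasEigenvalue_of_det_neg hdet
    refine ⟨μ, ⟨hμ, hμE⟩, fun ν ⟨hν, hνE⟩ => by_contra fun hνμ => ?_⟩
    have hsum := Submodule.finrank_sup_add_finrank_inf_eq (E ν) (E μ)
    rw [disjoint_iff.mp ((Module.End.eigenspaces_iSupIndep _).pairwiseDisjoint hνμ),
      finrank_bot] at hsum
    have := hrank hν hμ
    have := hrank_pos hμE
    have := hrank_pos hνE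
    omega
  · exact le_antisymm (sup_idem (E μ) ▸ hrank hμ hμ) (hrank_pos hμE)
end

section
/- Let H be a real symmetric invertible d×d matrix with exactly one negative eigenvalue -λ₁ (with unit eigenvector e₁), and L a real matrix with HL skew-symmetric. Let -μ be the unique negative eigenvalue of H + L, with unit real eigenvector v of H - Lᵀ (which is similar to H + L via H⁻¹(H - Lᵀ)H = H + L). Then μ ≥ λ₁. -/
/-!
All negative eigenvalues of `H` equal `-λ₁`, so `x ↦ x + x² / λ₁` is nonnegative on the spectrum
of `H` and `M = H + λ₁⁻¹ H²` is positive semidefinite. Put `u = H⁻¹ v`. Pairing the eigenvalue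
equation with `u`, the term `uᵀ Lᵀ H u = -uᵀ (H L) u` vanishes because `H L` is skew, which leaves
`-μ uᵀ v = |v|² = 1`. Hence `0 ≤ uᵀ M u = uᵀ v + λ₁⁻¹ |v|² = λ₁⁻¹ - μ⁻¹`.
-/

open Matrix
open scoped MatrixOrder Finset

namespace Matrix

variable {n R : Type*} [Fintype n]

lemma mem_spectrum_of_mulVec_eq_smul [DecidableEq n] [Field R] {A : Matrix n n R} {a : R}
    {x : n → R} (hx : x ≠ 0) (h : A *ᵥ x = a • x) : a ∈ spectrum R A := by
  rw [← spectrum_toLin', ← Module.End.hasEigenvalue_iff_mem_spectrum]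
  exact Module.End.hasEigenvalue_of_hasEigenvector ⟨Module.End.mem_eigenspace_iff.mpr h, hx⟩

lemma dotProduct_mulVec_self_eq_zero_of_transpose_eq_neg [CommRing R] [IsAddTorsionFree R]
    {A : Matrix n n R} (hA : Aᵀ = -A) (u : n → R) : u ⬝ᵥ A *ᵥ u = 0 := by
  refine self_eq_neg.mp ?_
  conv_lhs => rw [dotProduct_mulVec, ← mulVec_transpose, hA, neg_mulVec, neg_dotProduct,
    dotProduct_comm]

lemma dotProduct_mulVec_eq_of_transpose_eq [CommSemiring R] {H : Matrix n n R} (hH : Hᵀ = H)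
    (u w : n → R) : u ⬝ᵥ H *ᵥ w = H *ᵥ u ⬝ᵥ w := by
  rw [dotProduct_mulVec, ← vecMul_transpose, hH, ← mulVec_transpose, hH]

lemma mul_dotProduct_mulVec_eq_of_sub_transpose_mulVec_eq_smul [CommRing R] [IsAddTorsionFree R]
    {H L : Matrix n n R} (hH : Hᵀ = H) (hHL : (H * L)ᵀ = -(H * L)) {c : R} {u : n → R}
    (h : (H - Lᵀ) *ᵥ H *ᵥ u = c • H *ᵥ u) :
    c * (u ⬝ᵥ H *ᵥ u) = H *ᵥ u ⬝ᵥ H *ᵥ u := by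
  have hLH : Lᵀ * H = -(H * L) := by rw [← hHL, transpose_mul, hH]
  calc c * (u ⬝ᵥ H *ᵥ u) = u ⬝ᵥ (H - Lᵀ) *ᵥ H *ᵥ u := by rw [h, dotProduct_smul, smul_eq_mul]
    _ = u ⬝ᵥ H *ᵥ H *ᵥ u + u ⬝ᵥ (H * L) *ᵥ u := by
      rw [sub_mulVec, dotProduct_sub, mulVec_mulVec u Lᵀ, hLH, neg_mulVec, dotProduct_neg,
        sub_neg_eq_add]
    _ = H *ᵥ u ⬝ᵥ H *ᵥ u := by
      rw [dotProduct_mulVec_self_eq_zero_of_transpose_eq_neg hHL, add_zero,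
        dotProduct_mulVec_eq_of_transpose_eq hH]

namespace IsHermitian

variable [DecidableEq n] {H : Matrix n n ℝ}

lemma posSemidef_add_smul_mul_self (hH : H.IsHermitian) {c : ℝ}
    (h : ∀ x ∈ spectrum ℝ H, 0 ≤ x + c * x ^ 2) : (H + c • (H * H)).PosSemidef := by
  have hcfc : cfc (fun x : ℝ => x + c * x ^ 2) H = H + c • (H * H) := by
    rw [cfc_add .., cfc_const_mul .., cfc_pow .., cfc_id' ..]
    simp only [sq]
  rw [← nonneg_iff_posSemidef, ← hcfc]
  exact cfc_nonneg h

lemma eq_of_mem_spectrum_of_card_neg_eigenvalues_eq_one (hH : H.IsHermitian)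
    (hneg : #{i | hH.eigenvalues i < 0} = 1) {x y : ℝ} (hx : x ∈ spectrum ℝ H)
    (hy : y ∈ spectrum ℝ H) (hx₀ : x < 0) (hy₀ : y < 0) : x = y := by
  rw [hH.spectrum_real_eq_range_eigenvalues] at hx hy
  obtain ⟨i, rfl⟩ := hx
  obtain ⟨j, rfl⟩ := hy
  exact congrArg _ (Finset.card_le_one.mp hneg.le i (by simpa using hx₀) j (by simpa using hy₀))

lemma posSemidef_add_inv_smul_mul_self (hH : H.IsHermitian)
    (hneg : #{i | hH.eigenvalues i < 0} = 1) {lam : ℝ} (hlam : 0 < lam)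
    (hmem : -lam ∈ spectrum ℝ H) : (H + lam⁻¹ • (H * H)).PosSemidef := by
  refine hH.posSemidef_add_smul_mul_self fun x hx => ?_
  rcases lt_or_ge x 0 with hx₀ | hx₀
  · obtain rfl := hH.eq_of_mem_spectrum_of_card_neg_eigenvalues_eq_one hneg hx hmem hx₀
      (neg_neg_of_pos hlam)
    rw [neg_sq, sq, inv_mul_cancel_left₀ hlam.ne', neg_add_cancel]
  · positivity

end IsHermitian

end Matrix

theorem stmt_8 (d : ℕ) (H L : Matrix (Fin d) (Fin d) ℝ)
    (hH : H.IsHermitian) (hHinv : IsUnit H.det)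
    (hHneg : (Finset.univ.filter (fun i => hH.eigenvalues i < 0)).card = 1)
    (lam₁ : ℝ) (hlam₁ : 0 < lam₁)
    (e₁ : Fin d → ℝ) (he₁ : e₁ ⬝ᵥ e₁ = 1)
    (heig₁ : H.mulVec e₁ = (-lam₁) • e₁)
    (hHL : (H * L)ᵀ = -(H * L))
    (μ : ℝ) (hμ : 0 < μ)
    (v : Fin d → ℝ) (hv : v ⬝ᵥ v = 1)
    (heigv : (H - Lᵀ).mulVec v = (-μ) • v) :
    lam₁ ≤ μ := by
  have hsymm : Hᵀ = H := (conjTranspose_eq_transpose_of_trivial H).symm.trans hH.eq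
  have he₁_ne : e₁ ≠ 0 := by rintro rfl; simp at he₁
  have hpsd := hH.posSemidef_add_inv_smul_mul_self hHneg hlam₁
    (mem_spectrum_of_mulVec_eq_smul he₁_ne heig₁)
  set u := H⁻¹ *ᵥ v
  have hHu : H *ᵥ u = v := by rw [mulVec_mulVec, mul_nonsing_inv H hHinv, one_mulVec]
  have hq : -μ * (u ⬝ᵥ v) = 1 := by
    have := mul_dotProduct_mulVec_eq_of_sub_transpose_mulVec_eq_smul hsymm hHL (hHu ▸ heigv)
    rwa [hHu, hv] at this
  have hM : 0 ≤ u ⬝ᵥ v + lam₁⁻¹ := by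
    have := hpsd.dotProduct_mulVec_nonneg u
    rwa [star_trivial, add_mulVec, smul_mulVec, ← mulVec_mulVec, dotProduct_add, dotProduct_smul,
      dotProduct_mulVec_eq_of_transpose_eq hsymm u (H *ᵥ u), hHu, hv, smul_eq_mul, mul_one] at this
  have huv : u ⬝ᵥ v = -μ⁻¹ := by field_simp; linarith
  exact (inv_le_inv₀ hμ hlam₁).mp (by linarith)
end
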